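/- arXiv:0911.0214 — 5 statements merged into one kernel-verified Lean document; each statement's English description precedes it below -/
import Mathlib

section
/- Any finite product of matrices of the form R_{Z_i} and L_{Z_i} with real parameters Z_i has strictly positive entries on the main diagonal and nonpositive entries on the antidiagonal; consequently its trace is at least 2. -/
/-!
Matrices with positive diagonal and nonpositive antidiagonal are closed under multiplication,
because the cross terms `b c'` feeding the diagonal of a product are products of two nonpositive
numbers. Each factor has determinant `1`, hence so does the product `[[a, b], [c, d]]`; then
`a d = 1 + b c ≥ 1`, and AM–GM gives `a + d ≥ 2`.
-/

open Matrix Real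

noncomputable def RZ (Z : ℝ) : Matrix (Fin 2) (Fin 2) ℝ :=
  !![Real.exp (-Z / 2), -Real.exp (Z / 2); 0, Real.exp (Z / 2)]

noncomputable def LZ (Z : ℝ) : Matrix (Fin 2) (Fin 2) ℝ :=
  !![Real.exp (-Z / 2), 0; -Real.exp (-Z / 2), Real.exp (Z / 2)]

namespace Matrix

variable {R : Type*} [CommRing R] [LinearOrder R] [IsStrictOrderedRing R]

def posDiagNonposAntidiag : Submonoid (Matrix (Fin 2) (Fin 2) R) where
  carrier := {M | 0 < M 0 0 ∧ 0 < M 1 1 ∧ M 0 1 ≤ 0 ∧ M 1 0 ≤ 0}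
  one_mem' := by simp
  mul_mem' := by
    rintro A B ⟨hA₀₀, hA₁₁, hA₀₁, hA₁₀⟩ ⟨hB₀₀, hB₁₁, hB₀₁, hB₁₀⟩
    simp only [Set.mem_ofPred_eq, mul_apply, Fin.sum_univ_two]
    refine ⟨?_, ?_, ?_, ?_⟩
    · nlinarith [mul_nonneg_of_nonpos_of_nonpos hA₀₁ hB₁₀]
    · nlinarith [mul_nonneg_of_nonpos_of_nonpos hA₁₀ hB₀₁]
    · nlinarith [mul_nonpos_of_nonneg_of_nonpos hA₀₀.le hB₀₁]
    · nlinarith [mul_nonpos_of_nonneg_of_nonpos hA₁₁.le hB₁₀]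

theorem two_le_trace_of_mem_posDiagNonposAntidiag {M : Matrix (Fin 2) (Fin 2) R}
    (hM : M ∈ posDiagNonposAntidiag) (hdet : M.det = 1) : 2 ≤ M.trace := by
  obtain ⟨h₀₀, h₁₁, h₀₁, h₁₀⟩ := hM
  rw [det_fin_two] at hdet
  rw [trace_fin_two]
  nlinarith [sq_nonneg (M 0 0 - M 1 1), mul_nonneg_of_nonpos_of_nonpos h₀₁ h₁₀]

end Matrix

theorem RZ_mem_posDiagNonposAntidiag (z : ℝ) : RZ z ∈ posDiagNonposAntidiag := by
  refine ⟨?_, ?_, ?_, ?_⟩ <;> simp [RZ, exp_pos, exp_nonneg]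

theorem LZ_mem_posDiagNonposAntidiag (z : ℝ) : LZ z ∈ posDiagNonposAntidiag := by
  refine ⟨?_, ?_, ?_, ?_⟩ <;> simp [LZ, exp_pos, exp_nonneg]

theorem exp_neg_half_mul_exp_half (z : ℝ) : exp (-z / 2) * exp (z / 2) = 1 := by
  rw [← exp_add, neg_div, neg_add_cancel, exp_zero]

theorem det_RZ (z : ℝ) : (RZ z).det = 1 := by
  simp [RZ, det_fin_two, exp_neg_half_mul_exp_half]

theorem det_LZ (z : ℝ) : (LZ z).det = 1 := by
  simp [LZ, det_fin_two, exp_neg_half_mul_exp_half]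

theorem product_RL_sign_structure_general (l : List (Matrix (Fin 2) (Fin 2) ℝ))
    (hmem : ∀ A ∈ l, ∃ z : ℝ, A = RZ z ∨ A = LZ z) :
    0 < l.prod 0 0 ∧ 0 < l.prod 1 1 ∧ l.prod 0 1 ≤ 0 ∧ l.prod 1 0 ≤ 0 ∧
      2 ≤ l.prod.trace := by
  have hsign : l.prod ∈ posDiagNonposAntidiag := by
    refine list_prod_mem fun A hA => ?_
    obtain ⟨z, rfl | rfl⟩ := hmem A hA
    exacts [RZ_mem_posDiagNonposAntidiag z, LZ_mem_posDiagNonposAntidiag z]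
  have hdet : l.prod ∈ MonoidHom.mker (detMonoidHom (n := Fin 2) (R := ℝ)) := by
    refine list_prod_mem fun A hA => ?_
    obtain ⟨z, rfl | rfl⟩ := hmem A hA
    exacts [det_RZ z, det_LZ z]
  exact ⟨hsign.1, hsign.2.1, hsign.2.2.1, hsign.2.2.2,
    two_le_trace_of_mem_posDiagNonposAntidiag hsign hdet⟩

theorem product_RL_sign_structure (l : List (Matrix (Fin 2) (Fin 2) ℝ))
    (hne : l ≠ [])
    (hmem : ∀ A ∈ l, ∃ z : ℝ, A = RZ z ∨ A = LZ z) :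
    0 < l.prod 0 0 ∧ 0 < l.prod 1 1 ∧ l.prod 0 1 ≤ 0 ∧ l.prod 1 0 ≤ 0 ∧
      2 ≤ l.prod.trace :=
  product_RL_sign_structure_general l hmem
end

section
/- Let A be the n×n upper unitriangular matrix with entries A_{ij} = G_{ij} for i < j, A_{ii} = 1, A_{ij} = 0 for i > j, over a commutative ring, and let B_{i,i+1} be the matrix equal to the identity except for the 2×2 block at rows/columns i, i+1 given by [[G_{i,i+1}, −1],[1, 0]]. Then B_{i,i+1} · A · B_{i,i+1}ᵀ is again upper unitriangular, with entries given by: (i+1,j)-entry = G_{i,j} for j > i+1; (j,i+1)-entry = G_{j,i} for j < i; (i,j)-entry = G_{i,j}G_{i,i+1} − G_{i+1,j} for j > i+1; (j,i)-entry = G_{j,i}G_{i,i+1} − G_{j,i+1} for j < i; (i,i+1)-entry = G_{i,i+1}; all other entries unchanged. -/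
open Matrix

/-- The upper unitriangular matrix built from the `G_{ij}`. -/
def Amat {R : Type*} [CommRing R] {n : ℕ} (G : Fin n → Fin n → R) :
    Matrix (Fin n) (Fin n) R :=
  fun j k => if j = k then 1 else if (j : ℕ) < k then G j k else 0

/-- The braid-move matrix `B_{i,i+1}` with 2×2 block `[[G_{i,i+1}, -1],[1,0]]`
at rows/columns `i, i'`. -/
def Bmat {R : Type*} [CommRing R] {n : ℕ} (i i' : Fin n) (g : R) :
    Matrix (Fin n) (Fin n) R :=
  fun j k =>
    if j = i ∧ k = i then g
    else if j = i ∧ k = i' then -1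
    else if j = i' ∧ k = i then 1
    else if j = i' ∧ k = i' then 0
    else if j = k then 1 else 0

/-- The transformed entries `G̃` of the braid-group move `R_{i,i+1}`. -/
def Gtilde {R : Type*} [CommRing R] {n : ℕ} (i i' : Fin n) (G : Fin n → Fin n → R) :
    Fin n → Fin n → R :=
  fun j k =>
    if j = i' ∧ (i' : ℕ) < k then G i k
    else if k = i' ∧ (j : ℕ) < i then G j i
    else if j = i ∧ (i' : ℕ) < k then G i k * G i i' - G i' k
    else if k = i ∧ (j : ℕ) < i then G j i * G i i' - G j i'
    else if j = i ∧ k = i' then G i i'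
    else G j k

/-!
Left multiplication by `Bmat i i' g` replaces rows `i, i'` by `g • row i - row i'` and `row i`;
right multiplication by its transpose does the same to columns. Applying both to `Amat G` and
sorting `j, k` by their position relative to the adjacent pair `i < i'` gives `Amat (Gtilde i i' G)`
entry by entry.
-/

section BraidMove

variable {R : Type*} [CommRing R] {n : ℕ}

lemma Bmat_row (i i' : Fin n) (hne : i ≠ i') (g : R) (j : Fin n) :
    Bmat i i' g j =
      if j = i then g • Pi.single i 1 - Pi.single i' 1
      else if j = i' then Pi.single i 1 else Pi.single j 1 := by
  ext k
  by_cases hj : j = i <;> by_cases hj' : j = i' <;> by_cases hk : k = i <;>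
    by_cases hk' : k = i' <;> simp_all [Bmat, Pi.single_apply, eq_comm]

lemma Bmat_mul_apply {m : Type*} (i i' : Fin n) (hne : i ≠ i') (g : R)
    (M : Matrix (Fin n) m R) (j : Fin n) (k : m) :
    (Bmat i i' g * M) j k =
      if j = i then g * M i k - M i' k else if j = i' then M i k else M j k := by
  rw [mul_apply', Bmat_row i i' hne]
  split_ifs <;> simp [sub_dotProduct, single_dotProduct]

lemma mul_Bmat_transpose_apply {m : Type*} (i i' : Fin n) (hne : i ≠ i') (g : R)
    (M : Matrix m (Fin n) R) (j : m) (k : Fin n) :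
    (M * (Bmat i i' g)ᵀ) j k =
      if k = i then g * M j i - M j i' else if k = i' then M j i else M j k := by
  rw [← transpose_apply (M * _), transpose_mul, transpose_transpose, Bmat_mul_apply i i' hne]
  rfl

end BraidMove

theorem braid_move_matrix_form {R : Type*} [CommRing R] {n : ℕ}
    (G : Fin n → Fin n → R) (i i' : Fin n) (h : (i : ℕ) + 1 = i') :
    Bmat i i' (G i i') * Amat G * (Bmat i i' (G i i'))ᵀ = Amat (Gtilde i i' G) := by
  have hne : i ≠ i' := fun e => by rw [e] at h; omega
  have position : ∀ x : Fin n, (x : ℕ) < i ∨ x = i ∨ x = i' ∨ (i' : ℕ) < x := by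
    intro x
    simp only [Fin.ext_iff]
    omega
  ext j k
  simp only [mul_Bmat_transpose_apply i i' hne, Bmat_mul_apply i i' hne]
  -- In each of the sixteen cases `omega` decides every condition in `Amat` and `Gtilde`.
  rcases position j with hj | rfl | rfl | hj <;> rcases position k with hk | rfl | rfl | hk <;>
    simp (disch := omega) only [Amat, Gtilde, Fin.ext_iff, if_pos, if_neg, ↓reduceIte,
      true_and, and_self] <;>
    ring
end

section
/- With A and B_{i,i+1} as above (over a commutative ring), the braid relation holds: the composite transformation A ↦ B A Bᵀ applied via B_{i−1,i}, then B_{i,i+1}, then B_{i−1,i} (with the B-matrices evaluated at the appropriately updated entries G) yields the same result as applying B_{i,i+1}, then B_{i−1,i}, then B_{i,i+1}. Equivalently, for the maps R_{i,i+1} defined on tuples (G_{jk})_{j<k} by the formulas of (braid-A): R_{i−1,i} ∘ R_{i,i+1} ∘ R_{i−1,i} = R_{i,i+1} ∘ R_{i−1,i} ∘ R_{i,i+1} for 2 ≤ i ≤ n−1. -/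
/-- The braid-group transformation `R_{i,i+1}` on the array of variables `G_{jk}`. -/
def braidR {R : Type*} [CommRing R] {n : ℕ} (i i' : Fin n) (G : Fin n → Fin n → R) :
    Fin n → Fin n → R :=
  fun j k =>
    if j = i' ∧ (i' : ℕ) < k then G i k
    else if k = i' ∧ (j : ℕ) < i then G j i
    else if j = i ∧ (i' : ℕ) < k then G i k * G i i' - G i' k
    else if k = i ∧ (j : ℕ) < i then G j i * G i i' - G j i'
    else if j = i ∧ k = i' then G i i'
    else G j k

set_option maxHeartbeats 4000000 in
theorem braid_relation {R : Type*} [CommRing R] {n : ℕ}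
    (a b c : Fin n) (hab : (a : ℕ) + 1 = b) (hbc : (b : ℕ) + 1 = c)
    (G : Fin n → Fin n → R) :
    braidR a b (braidR b c (braidR a b G)) =
      braidR b c (braidR a b (braidR b c G)) := by
  have h1 : ¬ a = b := by rw [Fin.ext_iff]; omega
  have h2 : ¬ b = a := by rw [Fin.ext_iff]; omega
  have h3 : ¬ a = c := by rw [Fin.ext_iff]; omega
  have h4 : ¬ c = a := by rw [Fin.ext_iff]; omega
  have h5 : ¬ b = c := by rw [Fin.ext_iff]; omega
  have h6 : ¬ c = b := by rw [Fin.ext_iff]; omega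
  have h7 : (a : ℕ) < b := by omega
  have h8 : (b : ℕ) < c := by omega
  have h9 : (a : ℕ) < c := by omega
  have h10 : ¬ (b : ℕ) < a := by omega
  have h11 : ¬ (c : ℕ) < a := by omega
  have h12 : ¬ (c : ℕ) < b := by omega
  funext j k
  have hj : j = a ∨ j = b ∨ j = c ∨ (j : ℕ) < a ∨ (c : ℕ) < j := by
    simp only [Fin.ext_iff]; omega
  have hk : k = a ∨ k = b ∨ k = c ∨ (k : ℕ) < a ∨ (c : ℕ) < k := by
    simp only [Fin.ext_iff]; omega
  unfold braidR
  rcases hj with rfl | rfl | rfl | hj | hj <;> rcases hk with rfl | rfl | rfl | hk | hk <;>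
    simp only [h1, h2, h3, h4, h5, h6, h7, h8, h9, h10, h11, h12, if_true, if_false,
      true_and, false_and, and_false, and_true, and_self, ite_true, ite_false,
      lt_self_iff_false, not_false_eq_true] <;>
    (first
      | ring1
      | omega
      | (split_ifs <;> first | ring1 | omega)
      | (have e1 : ¬ j = a := by rw [Fin.ext_iff]; omega
         have e2 : ¬ j = b := by rw [Fin.ext_iff]; omega
         have e3 : ¬ j = c := by rw [Fin.ext_iff]; omega
         have e4 : ¬ k = a := by rw [Fin.ext_iff]; omega
         have e5 : ¬ k = b := by rw [Fin.ext_iff]; omega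
         have e6 : ¬ k = c := by rw [Fin.ext_iff]; omega
         simp only [e1, e2, e3, e4, e5, e6, false_and, and_false, if_false, ite_false]))
end

section
/- Let B = B_{n−1,n}·B_{n−2,n−1}⋯B_{2,3}·B_{1,2} where each B_{i,i+1} is the identity matrix except for the 2×2 block [[G_{1,i+1}, −1],[1,0]] at rows/columns i, i+1 (over a commutative ring). Then B equals the matrix whose first column is (G_{1,2}, G_{1,3}, …, G_{1,n}, 1)ᵀ, with −1 in positions (k, k+1) for 1 ≤ k ≤ n−1 and zeros elsewhere. -/
open Matrix

/-!
Multiplying on the left by `B_{k,k+1}` with parameter `g` replaces row `k` by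
`g • (row k) - (row k+1)` and row `k+1` by the old row `k`, leaving the other rows alone.
Hence, by induction on `t`, the product of the first `t` factors, the `j`-th one with parameter
`c j`, has rows `c j • e₀ - e_{j+1}` for `j < t`, row `e₀` at `t`, and the rows of the identity
below; at `t = n - 1` this is the claimed matrix.
-/

/-- The matrix `B_{i,i+1}` (0-indexed block at rows/columns `k.castSucc`, `k.succ`)
with block `[[g, -1],[1,0]]`. -/
def BmatK {R : Type*} [CommRing R] {m : ℕ} (k : Fin (m + 1)) (g : R) :
    Matrix (Fin (m + 2)) (Fin (m + 2)) R :=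
  fun j l =>
    if j = k.castSucc ∧ l = k.castSucc then g
    else if j = k.castSucc ∧ l = k.succ then -1
    else if j = k.succ ∧ l = k.castSucc then 1
    else if j = k.succ ∧ l = k.succ then 0
    else if j = l then 1 else 0

section

variable {R : Type*} [CommRing R] {m : ℕ}

theorem BmatK_row (k : Fin (m + 1)) (g : R) (j : Fin (m + 2)) :
    BmatK k g j =
      if j = k.castSucc then g • Pi.single k.castSucc 1 - Pi.single k.succ 1
      else if j = k.succ then Pi.single k.castSucc 1
      else Pi.single j 1 := by
  have hne : k.castSucc ≠ k.succ := k.castSucc_lt_succ.ne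
  ext l
  unfold BmatK
  split_ifs <;> simp_all [eq_comm]

theorem BmatK_mul_row (k : Fin (m + 1)) (g : R) (P : Matrix (Fin (m + 2)) (Fin (m + 2)) R)
    (j : Fin (m + 2)) :
    (BmatK k g * P) j =
      if j = k.castSucc then g • P k.castSucc - P k.succ
      else if j = k.succ then P k.castSucc
      else P j := by
  change BmatK k g j ᵥ* P = _
  rw [BmatK_row]
  split_ifs <;> simp [sub_vecMul, smul_vecMul, Matrix.row]

def BmatKPartialProd (c : Fin (m + 2) → R) (t : Fin (m + 2)) :
    Matrix (Fin (m + 2)) (Fin (m + 2)) R :=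
  (List.ofFn fun k : Fin t =>
    BmatK (Fin.castLE t.is_le k) (c (Fin.castLE t.is_le k).castSucc)).reverse.prod

theorem BmatKPartialProd_zero (c : Fin (m + 2) → R) : BmatKPartialProd c 0 = 1 := rfl

theorem BmatKPartialProd_succ (c : Fin (m + 2) → R) (i : Fin (m + 1)) :
    BmatKPartialProd c i.succ = BmatK i (c i.castSucc) * BmatKPartialProd c i.castSucc := by
  simp only [BmatKPartialProd, Fin.val_succ, List.ofFn_succ', List.concat_eq_append,
    List.reverse_append, List.reverse_singleton, List.singleton_append, List.prod_cons]
  rfl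

def partialProdForm (c : Fin (m + 2) → R) (t : Fin (m + 2)) :
    Matrix (Fin (m + 2)) (Fin (m + 2)) R :=
  fun j l =>
    if j < t then (if (l : ℕ) = 0 then c j else if (l : ℕ) = j + 1 then -1 else 0)
    else if j = t then (if (l : ℕ) = 0 then 1 else 0)
    else if j = l then 1 else 0

theorem partialProdForm_zero (c : Fin (m + 2) → R) : partialProdForm c 0 = 1 := by
  ext j l
  simp only [partialProdForm, one_apply, Fin.ext_iff, Fin.lt_def, Fin.val_zero]
  split_ifs <;> first | rfl | omega

theorem BmatK_mul_partialProdForm (c : Fin (m + 2) → R) (i : Fin (m + 1)) :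
    BmatK i (c i.castSucc) * partialProdForm c i.castSucc = partialProdForm c i.succ := by
  ext j l
  rw [BmatK_mul_row]
  have hlt : i.castSucc < i.succ := i.castSucc_lt_succ
  by_cases hj₀ : j = i.castSucc
  · subst hj₀
    have hsucc : ∀ l : Fin (m + 2), i.succ = l ↔ (l : ℕ) = i + 1 := by
      simp [Fin.ext_iff, eq_comm]
    simp only [ite_true, Pi.sub_apply, Pi.smul_apply, smul_eq_mul, partialProdForm,
      lt_self_iff_false, hlt, hlt.not_gt, hlt.ne', hsucc, if_false]
    split_ifs <;> simp_all
  by_cases hj₁ : j = i.succ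
  · subst hj₁
    simp [partialProdForm, hlt.ne']
  · have hlt_iff : j < i.succ ↔ j < i.castSucc := by
      simp only [Fin.lt_def, Fin.ext_iff, Fin.val_succ, Fin.val_castSucc] at *; omega
    simp [partialProdForm, hj₀, hj₁, hlt_iff]

theorem BmatKPartialProd_eq_partialProdForm (c : Fin (m + 2) → R) (t : Fin (m + 2)) :
    BmatKPartialProd c t = partialProdForm c t := by
  induction t using Fin.induction with
  | zero => rw [BmatKPartialProd_zero, partialProdForm_zero]
  | succ i ih => rw [BmatKPartialProd_succ, ih, BmatK_mul_partialProdForm]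

end

theorem B_product_formula {R : Type*} [CommRing R] {m : ℕ}
    (G : Fin (m + 2) → Fin (m + 2) → R) :
    ((List.ofFn fun k : Fin (m + 1) => BmatK k (G 0 k.succ)).reverse).prod =
      fun j l : Fin (m + 2) =>
        if (l : ℕ) = 0 then
          (if hj : (j : ℕ) < m + 1 then G 0 ⟨(j : ℕ) + 1, by omega⟩ else 1)
        else if (l : ℕ) = (j : ℕ) + 1 then -1
        else 0 := by
  set c : Fin (m + 2) → R := fun j => if hj : (j : ℕ) < m + 1 then G 0 ⟨j + 1, by omega⟩ else 1
  have hc : ∀ k : Fin (m + 1), G 0 k.succ = c k.castSucc := fun k => by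
    simp only [c, Fin.val_castSucc, dif_pos k.isLt]; rfl
  calc _ = BmatKPartialProd c (Fin.last _) := by simp only [hc]; rfl
    _ = partialProdForm c (Fin.last _) := BmatKPartialProd_eq_partialProdForm c _
    _ = _ := by
      ext j l
      simp only [partialProdForm, c, Fin.ext_iff, Fin.lt_def, Fin.val_last]
      split_ifs <;> first | rfl | omega
end

section
/- Suppose G ∈ SL(2,ℝ) is a product of matrices R_{Z_i} and L_{Z_i} containing at least one R and at least one L factor. Then tr G > 2 (G is strictly hyperbolic). -/
open Matrix Real

private def Q (M : Matrix (Fin 2) (Fin 2) ℝ) : Prop :=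
  0 < M 0 0 ∧ 0 < M 1 1 ∧ M 0 1 ≤ 0 ∧ M 1 0 ≤ 0 ∧
    M 0 0 * M 1 1 - M 0 1 * M 1 0 = 1

private lemma Q_RZ (z : ℝ) : Q (RZ z) := by
  have h1 := Real.exp_pos (-z / 2)
  have h2 := Real.exp_pos (z / 2)
  refine ⟨by simpa [RZ], by simpa [RZ], by simp [RZ]; positivity, by simp [RZ], ?_⟩
  have hz : -z / 2 + z / 2 = 0 := by ring
  simp [RZ, ← Real.exp_add, hz]

private lemma Q_LZ (z : ℝ) : Q (LZ z) := by
  have h1 := Real.exp_pos (-z / 2)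
  have h2 := Real.exp_pos (z / 2)
  refine ⟨by simpa [LZ], by simpa [LZ], by simp [LZ], by simp [LZ]; positivity, ?_⟩
  have hz : -z / 2 + z / 2 = 0 := by ring
  simp [LZ, ← Real.exp_add, hz]

private lemma Q_mul {M N : Matrix (Fin 2) (Fin 2) ℝ} (hM : Q M) (hN : Q N) :
    Q (M * N) := by
  obtain ⟨a1, d1, b1, c1, e1⟩ := hM
  obtain ⟨a2, d2, b2, c2, e2⟩ := hN
  refine ⟨?_, ?_, ?_, ?_, ?_⟩ <;>
    simp only [Matrix.mul_apply, Fin.sum_univ_two] <;> nlinarith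

private lemma b_mul_left {M N : Matrix (Fin 2) (Fin 2) ℝ} (hM : Q M) (hN : Q N)
    (hb : M 0 1 < 0) : (M * N) 0 1 < 0 := by
  obtain ⟨a1, d1, b1, c1, e1⟩ := hM
  obtain ⟨a2, d2, b2, c2, e2⟩ := hN
  simp only [Matrix.mul_apply, Fin.sum_univ_two]
  nlinarith

private lemma b_mul_right {M N : Matrix (Fin 2) (Fin 2) ℝ} (hM : Q M) (hN : Q N)
    (hb : N 0 1 < 0) : (M * N) 0 1 < 0 := by
  obtain ⟨a1, d1, b1, c1, e1⟩ := hM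
  obtain ⟨a2, d2, b2, c2, e2⟩ := hN
  simp only [Matrix.mul_apply, Fin.sum_univ_two]
  nlinarith

private lemma c_mul_left {M N : Matrix (Fin 2) (Fin 2) ℝ} (hM : Q M) (hN : Q N)
    (hc : M 1 0 < 0) : (M * N) 1 0 < 0 := by
  obtain ⟨a1, d1, b1, c1, e1⟩ := hM
  obtain ⟨a2, d2, b2, c2, e2⟩ := hN
  simp only [Matrix.mul_apply, Fin.sum_univ_two]
  nlinarith

private lemma c_mul_right {M N : Matrix (Fin 2) (Fin 2) ℝ} (hM : Q M) (hN : Q N)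
    (hc : N 1 0 < 0) : (M * N) 1 0 < 0 := by
  obtain ⟨a1, d1, b1, c1, e1⟩ := hM
  obtain ⟨a2, d2, b2, c2, e2⟩ := hN
  simp only [Matrix.mul_apply, Fin.sum_univ_two]
  nlinarith

private lemma main_induction (l : List (Matrix (Fin 2) (Fin 2) ℝ))
    (hmem : ∀ A ∈ l, ∃ z : ℝ, A = RZ z ∨ A = LZ z) :
    Q l.prod ∧ ((∃ A ∈ l, ∃ z : ℝ, A = RZ z) → l.prod 0 1 < 0) ∧
      ((∃ A ∈ l, ∃ z : ℝ, A = LZ z) → l.prod 1 0 < 0) := by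
  induction l with
  | nil =>
    refine ⟨⟨?_, ?_, ?_, ?_, ?_⟩, ?_, ?_⟩ <;>
      simp [Matrix.one_apply]
  | cons h t ih =>
    obtain ⟨Qt, bt, ct⟩ := ih (fun A hA => hmem A (List.mem_cons_of_mem _ hA))
    obtain ⟨z, hz⟩ := hmem h List.mem_cons_self
    have Qh : Q h := by
      rcases hz with rfl | rfl
      · exact Q_RZ z
      · exact Q_LZ z
    rw [List.prod_cons]
    refine ⟨Q_mul Qh Qt, ?_, ?_⟩
    · rintro ⟨A, hAmem, w, hA⟩
      rcases List.mem_cons.mp hAmem with rfl | hAt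
      · apply b_mul_left Qh Qt
        subst hA
        have := Real.exp_pos (w / 2)
        simp only [RZ]
        simpa using by positivity
      · exact b_mul_right Qh Qt (bt ⟨A, hAt, w, hA⟩)
    · rintro ⟨A, hAmem, w, hA⟩
      rcases List.mem_cons.mp hAmem with rfl | hAt
      · apply c_mul_left Qh Qt
        subst hA
        have := Real.exp_pos (-w / 2)
        simp only [LZ]
        simpa using by positivity
      · exact c_mul_right Qh Qt (ct ⟨A, hAt, w, hA⟩)

theorem product_with_R_and_L_is_hyperbolic (l : List (Matrix (Fin 2) (Fin 2) ℝ))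
    (hmem : ∀ A ∈ l, ∃ z : ℝ, A = RZ z ∨ A = LZ z)
    (hR : ∃ A ∈ l, ∃ z : ℝ, A = RZ z)
    (hL : ∃ A ∈ l, ∃ z : ℝ, A = LZ z) :
    2 < l.prod.trace := by
  obtain ⟨⟨ha, hd, _, _, he⟩, hb, hc⟩ := main_induction l hmem
  have hb' := hb hR
  have hc' := hc hL
  rw [Matrix.trace_fin_two]
  nlinarith [sq_nonneg (l.prod 0 0 - l.prod 1 1)]
end
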